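/- Under the Case-C1 setup, the removal of v_5 disconnects s_1 from both destinations; that is, every path from s_1 to d_1 contains v_5 and every path from s_1 to d_2 contains v_5. -/

import Mathlib

open List

/-- `IsPath E p u w` : the nonempty list `p` of vertices is a directed path
from `u` to `w` with respect to the edge relation `E`. -/
def IsPath {V : Type*} (E : V → V → Prop) (p : List V) (u w : V) : Prop :=
  p ≠ [] ∧ p.head? = some u ∧ p.getLast? = some w ∧ p.Chain' E

/-- `Reaches E u w` (written `u ~> w`) : there is a directed path from `u` to `w`. -/
def Reaches {V : Type*} (E : V → V → Prop) (u w : V) : Prop :=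
  ∃ p, IsPath E p u w

/-- A two-unicast layered network: a finite directed graph, with two sources
`s1, s2` and two destinations `d1, d2` (all four distinct), vertices partitioned
into layers `1, ..., r` such that every edge goes from a layer to the next one,
the first layer is `{s1, s2}`, the last layer is `{d1, d2}`, and each source
reaches its corresponding destination. -/
structure TwoUnicastNetwork (V : Type*) [Fintype V] where
  E : V → V → Prop
  s1 : V
  s2 : V
  d1 : V
  d2 : V
  r : ℕ
  layer : V → ℕ
  layer_pos : ∀ v, 1 ≤ layer v
  layer_le : ∀ v, layer v ≤ r
  edge_layer : ∀ u w, E u w → layer w = layer u + 1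
  s_ne : s1 ≠ s2
  d_ne : d1 ≠ d2
  sd_ne : ∀ s d, (s = s1 ∨ s = s2) → (d = d1 ∨ d = d2) → s ≠ d
  first_layer : ∀ v, layer v = 1 ↔ v = s1 ∨ v = s2
  last_layer : ∀ v, layer v = r ↔ v = d1 ∨ v = d2
  conn1 : Reaches E s1 d1
  conn2 : Reaches E s2 d2

/-- `InterferesOn N S Ri srcOther v` : within the induced subgraph `G[S]`, the
node `v` causes interference on the path `Ri` : `v ∈ S`, `v ∉ Ri`, there is an
edge (inside `G[S]`) from `v` into a node of `Ri`, and there is a path from the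
other source `srcOther` to `v` lying inside `G[S]` and disjoint from `Ri`. -/
def InterferesOn {V : Type*} [Fintype V] (N : TwoUnicastNetwork V) (S : Set V)
    (Ri : List V) (srcOther : V) (v : V) : Prop :=
  v ∈ S ∧ v ∉ Ri ∧ (∃ w ∈ Ri, w ∈ S ∧ N.E v w) ∧
    ∃ q, IsPath N.E q srcOther v ∧ (∀ x ∈ q, x ∈ S) ∧ ∀ x ∈ q, x ∉ Ri

/-- `n_i(G[S])` : the number of nodes causing interference on `Ri` within the
induced subgraph `G[S]`, the interfering path coming from `srcOther`. -/
noncomputable def nInterf {V : Type*} [Fintype V] (N : TwoUnicastNetwork V)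
    (S : Set V) (Ri : List V) (srcOther : V) : ℕ :=
  {v | InterferesOn N S Ri srcOther v}.ncard

/-- `n_i^D` : the number of nodes of the other path `Rother` causing (direct)
interference on `Ri` in `G`. -/
noncomputable def nDirect {V : Type*} [Fintype V] (N : TwoUnicastNetwork V)
    (Ri Rother : List V) (srcOther : V) : ℕ :=
  {v | InterferesOn N Set.univ Ri srcOther v ∧ v ∈ Rother}.ncard

/-- The pair `(R1, R2)` (paths `s1 → d1` and `s2 → d2`) has manageable
interference: there is `S ⊇ R1 ∪ R2` with `n_1(G[S]) ≠ 1` and `n_2(G[S]) ≠ 1`. -/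
def Manageable {V : Type*} [Fintype V] (N : TwoUnicastNetwork V)
    (R1 R2 : List V) : Prop :=
  ∃ S : Set V, (∀ x ∈ R1, x ∈ S) ∧ (∀ x ∈ R2, x ∈ S) ∧
    nInterf N S R1 N.s2 ≠ 1 ∧ nInterf N S R2 N.s1 ≠ 1

/-- The pair `(R1, R2)` has `(s1,d1)`-manageable interference. -/
def Manageable1 {V : Type*} [Fintype V] (N : TwoUnicastNetwork V)
    (R1 R2 : List V) : Prop :=
  ∃ S : Set V, (∀ x ∈ R1, x ∈ S) ∧ (∀ x ∈ R2, x ∈ S) ∧ nInterf N S R1 N.s2 ≠ 1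

/-- The pair `(R1, R2)` has `(s2,d2)`-manageable interference. -/
def Manageable2 {V : Type*} [Fintype V] (N : TwoUnicastNetwork V)
    (R1 R2 : List V) : Prop :=
  ∃ S : Set V, (∀ x ∈ R1, x ∈ S) ∧ (∀ x ∈ R2, x ∈ S) ∧ nInterf N S R2 N.s1 ≠ 1

/-- Removal of the vertex `v` disconnects `a` from `b` :
every path from `a` to `b` contains `v`. -/
def CutVert {V : Type*} [Fintype V] (N : TwoUnicastNetwork V) (v a b : V) : Prop :=
  ∀ p, IsPath N.E p a b → v ∈ p

/-!
Rerouting `P22` along `Pvmv1` from `vm` to `v2` and back through the edge `v2 → v0` gives a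
path `R2` from `s2` to `d2` that avoids `P11` and passes through `v6`. As `n_1 ≥ 2` and
`(P11, R2)` is not manageable, `v5`, which has the edge `v5 → v6`, is the only node interfering
on `R2`; so every path from `s1` to `d2`, or to `v2`, passes through `v5`.

Now let `P` be a path from `s1` to `d1` avoiding `v5`. It avoids `P22` and the part of `Pvmv1`
up to `v2`, and inside any `S ⊇ P ∪ P22` avoiding `v5` nothing interferes on `P22`. Since
`(P, P22)` is not manageable, some node of `P22` interferes on `P` within `P ∪ P22`, and
continuing from `v2` along `Pvmv1` to `v1` and then along `P11` to `d1` yields a second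
interferer on `P`, off `P22`, in a set that still avoids `v5`: a contradiction.
-/

theorem isPath_iff {V : Type*} {E : V → V → Prop} {p : List V} {a b : V} :
    IsPath E p a b ↔ p ≠ [] ∧ p.head? = some a ∧ p.getLast? = some b ∧ p.IsChain E :=
  Iff.rfl

namespace IsPath

variable {V : Type*} {E : V → V → Prop} {p q R : List V} {a b c d x y : V} {k : ℕ}

theorem singleton (a : V) : IsPath E [a] a a := ⟨by simp, rfl, rfl, isChain_singleton a⟩

theorem eq_cons (hp : IsPath E p a b) : p = a :: p.tail := by
  obtain ⟨hne, hh, -, -⟩ := hp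
  cases p with
  | nil => contradiction
  | cons y t => simp_all

theorem head_mem (hp : IsPath E p a b) : a ∈ p := mem_of_mem_head? hp.2.1

theorem getLast_mem (hp : IsPath E p a b) : b ∈ p := mem_of_mem_getLast? hp.2.2.1

theorem cons_cons_iff {t : List V} :
    IsPath E (a :: x :: t) c d ↔ a = c ∧ E a x ∧ IsPath E (x :: t) x d := by
  simp only [isPath_iff, isChain_cons_cons, getLast?_cons_cons, head?_cons, Option.some.injEq]
  grind

theorem singleton_iff : IsPath E [x] a b ↔ x = a ∧ x = b := by
  simp [isPath_iff]

theorem append (hp : IsPath E p a b) (hbc : E b c) (hq : IsPath E q c d) :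
    IsPath E (p ++ q) a d := by
  obtain ⟨hne₁, hh₁, hl₁, hc₁⟩ := hp
  obtain ⟨hne₂, hh₂, hl₂, hc₂⟩ := hq
  refine ⟨by simp [hne₁], by rwa [head?_append_of_ne_nil _ hne₁],
    by rwa [getLast?_append_of_ne_nil _ hne₂], hc₁.append hc₂ ?_⟩
  simp_all

theorem trans (hp : IsPath E p a b) (hq : IsPath E q b c) : IsPath E (p ++ q.tail) a c := by
  rw [hq.eq_cons] at hq
  rcases hq' : q.tail with _ | ⟨y, t⟩
  · rw [hq', singleton_iff] at hq
    simpa [← hq.2] using hp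
  · rw [hq', cons_cons_iff] at hq
    exact hp.append hq.2.1 hq.2.2

theorem split (hp : IsPath E p a b) (hx : x ∈ p) :
    ∃ p₁ p₂, IsPath E p₁ a x ∧ IsPath E p₂ x b ∧ p₁ ⊆ p ∧ p₂ ⊆ p ∧ ∀ y ∈ p, y ∈ p₁ ∨ y ∈ p₂ := by
  obtain ⟨s, t, rfl⟩ := mem_iff_append.mp hx
  obtain ⟨hne, hh, hl, hc⟩ := hp
  refine ⟨s ++ [x], x :: t, ⟨by simp, ?_, by simp, ?_⟩, ⟨by simp, rfl, ?_, ?_⟩, ?_, ?_, ?_⟩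
  · cases s <;> simp_all
  · exact hc.infix ⟨[], t, by simp⟩
  · rw [getLast?_append_of_ne_nil _ (cons_ne_nil _ _)] at hl
    exact hl
  · exact hc.right_of_append
  · exact append_subset.2 ⟨subset_append_left _ _, cons_subset.2 ⟨hx, nil_subset _⟩⟩
  · exact subset_append_right _ _
  · intro y hy
    simp only [mem_append, mem_cons] at hy ⊢
    tauto

theorem exists_edge_into (hp : IsPath E p a b) (ha : a ∉ R) (hb : b ∈ R) :
    ∃ q u w, IsPath E q a u ∧ q ⊆ p ∧ (∀ y ∈ q, y ∉ R) ∧ E u w ∧ w ∈ p ∧ w ∈ R := by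
  induction p generalizing a with
  | nil => exact absurd rfl hp.1
  | cons y t ih =>
    rcases t with _ | ⟨z, t⟩
    · obtain ⟨rfl, rfl⟩ := singleton_iff.mp hp
      exact absurd hb ha
    obtain ⟨rfl, hyz, hzt⟩ := cons_cons_iff.mp hp
    by_cases hz : z ∈ R
    · exact ⟨[y], y, z, singleton y, by simp, by simpa using ha, hyz, by simp, hz⟩
    obtain ⟨q, u, w, hq, hqp, hqR, huw, hwp, hwR⟩ := ih hzt hz
    refine ⟨y :: q, u, w, (singleton y).append hyz hq, ?_, ?_, huw, mem_cons_of_mem _ hwp, hwR⟩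
    · exact cons_subset_cons _ hqp
    · simpa [ha] using hqR


theorem rel_of_getElem? (hp : IsPath E p a b) (hx : p[k]? = some x) (hy : p[k + 1]? = some y) :
    E x y := by
  obtain ⟨hk, rfl⟩ := List.getElem?_eq_some_iff.mp hy
  obtain ⟨-, rfl⟩ := List.getElem?_eq_some_iff.mp hx
  exact hp.2.2.2.getElem k hk

theorem mem_of_forall_mem_of_rel {t : V} (h : ∀ p, IsPath E p a t → x ∈ p) (hbc : E b c)
    (hq : IsPath E q c t) (hxq : x ∉ q) (hp : IsPath E p a b) : x ∈ p :=
  (mem_append.mp (h _ (hp.append hbc hq))).resolve_right hxq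

theorem exists_detour {s t : V} (hR : IsPath E R s t) (ha : a ∈ R) (hq : IsPath E q a b)
    (hbc : E b c) (hc : c ∈ R) :
    ∃ R', IsPath E R' s t ∧ (∀ z ∈ R', z ∈ R ∨ z ∈ q) ∧ q ⊆ R' := by
  obtain ⟨R₁, -, hR₁, -, hR₁R, -, -⟩ := hR.split ha
  obtain ⟨-, R₂, -, hR₂, -, hR₂R, -⟩ := hR.split hc
  refine ⟨R₁ ++ q.tail ++ R₂, (hR₁.trans hq).append hbc hR₂, ?_, ?_⟩
  · intro z hz
    simp only [mem_append] at hz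
    rcases hz with (hz | hz) | hz
    exacts [.inl (hR₁R hz), .inr (mem_of_mem_tail hz), .inl (hR₂R hz)]
  · rw [hq.eq_cons, cons_subset]
    exact ⟨mem_append_left _ (mem_append_left _ hR₁.getLast_mem),
      subset_append_of_subset_left _ (subset_append_right _ _)⟩

section Layered

variable [Fintype V] {N : TwoUnicastNetwork V}

theorem layer_getElem (hp : IsPath N.E p a b) (i : ℕ) (hi : i < p.length) :
    N.layer p[i] = N.layer a + i := by
  induction i with
  | zero =>
    have h := hp.2.1
    rw [head?_eq_getElem?, getElem?_eq_getElem hi, Option.some_inj] at h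
    simp [h]
  | succ i ih => rw [N.edge_layer _ _ (hp.2.2.2.getElem i hi), ih (by omega), Nat.add_assoc]

theorem idxOf_add_layer [DecidableEq V] (hp : IsPath N.E p a b) (hx : x ∈ p) :
    p.idxOf x + N.layer a = N.layer x := by
  have hlt := idxOf_lt_length_iff.mpr hx
  rw [← congrArg N.layer (getElem_idxOf hlt), hp.layer_getElem _ hlt, Nat.add_comm]

theorem eq_of_layer_eq (hp : IsPath N.E p a b) (hx : x ∈ p) (hy : y ∈ p)
    (h : N.layer x = N.layer y) : x = y := by
  classical
  have := hp.idxOf_add_layer hx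
  exact (idxOf_inj hx).mp (by have := hp.idxOf_add_layer hy; omega)

theorem layer_le_of_mem (hp : IsPath N.E p a b) (hx : x ∈ p) : N.layer a ≤ N.layer x := by
  classical
  have := hp.idxOf_add_layer hx
  omega

theorem layer_le (hp : IsPath N.E p a b) : N.layer a ≤ N.layer b :=
  hp.layer_le_of_mem hp.getLast_mem

theorem eq_of_isPath (hp : IsPath N.E p a b) (hq : IsPath N.E q b a) : a = b :=
  hp.eq_of_layer_eq hp.head_mem hp.getLast_mem (le_antisymm hp.layer_le hq.layer_le)

theorem mem_left_of_isPath (hp : IsPath N.E p a b) (hq : IsPath N.E q b c) (hx : x ∈ p ∨ x ∈ q)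
    {r : List V} (hr : IsPath N.E r x b) : x ∈ p := by
  rcases hx with hx | hx
  · exact hx
  obtain ⟨r', -, hr', -, -, -, -⟩ := hq.split hx
  exact hr'.eq_of_isPath hr ▸ hp.getLast_mem

theorem notMem_of_rel_of_isPath (hp : IsPath N.E p a b) (hxy : N.E x y) {r : List V}
    (hr : IsPath N.E r y a) : x ∉ p := fun hx => by
  have := hp.layer_le_of_mem hx
  have := hr.layer_le
  have := N.edge_layer _ _ hxy
  omega

theorem s1_notMem (hp : IsPath N.E p N.s2 b) : N.s1 ∉ p := fun h =>
  N.s_ne <| hp.eq_of_layer_eq h hp.head_mem <| by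
    rw [(N.first_layer _).mpr (.inl rfl), (N.first_layer _).mpr (.inr rfl)]


variable [DecidableEq V] {T : List V} {z : V}

theorem notMem_of_idxOf_le (hp : IsPath N.E p a b) (hx : x ∈ p) (hy : y ∈ p) (hxy : N.E x y)
    (hlast : ∀ z ∈ p, z ∈ T → p.idxOf z ≤ p.idxOf x) : y ∉ T := fun hyT => by
  have := hlast y hy hyT
  have := hp.idxOf_add_layer hx
  have := hp.idxOf_add_layer hy
  have := N.edge_layer _ _ hxy
  omega

theorem eq_of_mem_suffix_of_idxOf_le (hp : IsPath N.E p a b) (hqp : q <:+ p)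
    (hq : IsPath N.E q c d) (hlast : ∀ z ∈ p, z ∈ T → p.idxOf z ≤ p.idxOf c)
    (hz : z ∈ q) (hzT : z ∈ T) : z = c := by
  have hzp := hqp.subset hz
  have := hlast z hzp hzT
  have := hp.idxOf_add_layer hzp
  have := hp.idxOf_add_layer (hqp.subset hq.head_mem)
  exact hq.eq_of_layer_eq hz hq.head_mem (le_antisymm (by omega) (hq.layer_le_of_mem hz))

end Layered

end IsPath

section Interference

variable {V : Type*} [Fintype V] {N : TwoUnicastNetwork V} {S S' : Set V} {R q : List V}
  {src u v x b : V}

theorem InterferesOn.mono (hS : S ⊆ S') (h : InterferesOn N S R src u) :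
    InterferesOn N S' R src u := by
  obtain ⟨huS, huR, ⟨w, hwR, hwS, huw⟩, q, hq, hqS, hqR⟩ := h
  exact ⟨hS huS, huR, ⟨w, hwR, hS hwS, huw⟩, q, hq, fun x hx => hS (hqS x hx), hqR⟩

theorem exists_interferesOn_of_isPath {X Y : List V} {c : V} (hX : IsPath N.E X src c)
    (hXR : ∀ x ∈ X, x ∉ R) (hY : IsPath N.E Y c b) (hb : b ∈ R) (hXS : ∀ x ∈ X, x ∈ S)
    (hYS : ∀ y ∈ Y, y ∈ S) : ∃ u ∈ Y, InterferesOn N S R src u := by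
  obtain ⟨q, u, w, hq, hqY, hqR, huw, hwY, hwR⟩ := hY.exists_edge_into (hXR c hX.getLast_mem) hb
  have hmem : ∀ y ∈ X ++ q.tail, y ∈ X ∨ y ∈ q := fun y hy =>
    (mem_append.mp hy).imp_right mem_of_mem_tail
  refine ⟨u, hqY hq.getLast_mem, hYS u (hqY hq.getLast_mem), hqR u hq.getLast_mem,
    ⟨w, hwR, hYS w hwY, huw⟩, X ++ q.tail, hX.trans hq, fun y hy => ?_, fun y hy => ?_⟩
  · exact (hmem y hy).elim (hXS y) (fun h => hYS y (hqY h))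
  · exact (hmem y hy).elim (hXR y) (hqR y)

theorem mem_of_forall_interferesOn_eq (huniq : ∀ v, InterferesOn N Set.univ R src v → v = u)
    (hsrc : src ∉ R) (hq : IsPath N.E q src b) (hb : b ∈ R) : u ∈ q := by
  obtain ⟨v, hvq, hv⟩ := exists_interferesOn_of_isPath (.singleton src) (by simpa using hsrc) hq hb
    (fun _ _ => trivial) (fun _ _ => trivial)
  exact huniq v hv ▸ hvq

theorem IsPath.notMem_of_forall_interferesOn_eq
    (huniq : ∀ v, InterferesOn N Set.univ R src v → v = u) (huR : u ∉ R) (hsrc : src ∉ R)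
    (hq : IsPath N.E q src u) : ∀ x ∈ q, x ∉ R := by
  intro x hx hxR
  obtain ⟨q₁, q₂, hq₁, hq₂, -, -, -⟩ := hq.split hx
  obtain ⟨-, r, -, hr, -, -, -⟩ := hq₁.split (mem_of_forall_interferesOn_eq huniq hsrc hq₁ hxR)
  exact huR (hr.eq_of_isPath hq₂ ▸ hxR)

theorem nInterf_eq_zero (huniq : ∀ v, InterferesOn N Set.univ R src v → v = u)
    (hcut : ∀ q, IsPath N.E q src u → x ∈ q) (hx : x ∉ S) : nInterf N S R src = 0 := by
  refine (Set.ncard_eq_zero (Set.toFinite _)).mpr (Set.eq_empty_of_forall_notMem fun v hv => ?_)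
  have hvu := huniq v (InterferesOn.mono (Set.subset_univ S) hv)
  obtain ⟨-, -, -, q, hq, hqS, -⟩ := hv
  rw [hvu] at hq
  exact hx (hqS x (hcut q hq))

theorem one_lt_nInterf (hu : InterferesOn N S R src u) (hv : InterferesOn N S R src v)
    (huv : u ≠ v) : 1 < nInterf N S R src :=
  (Set.one_lt_ncard (Set.toFinite _)).mpr ⟨u, hu, v, hv, huv⟩

end Interference

section CaseC1

variable {V : Type*} [Fintype V] {N : TwoUnicastNetwork V} {P P22 Q R : List V}
  {vm v1 v2 w x : V}

theorem mem_of_isPath_s1_d2 {R1 R2 p : List V} {v : V} (hR1 : IsPath N.E R1 N.s1 N.d1)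
    (hR2 : IsPath N.E R2 N.s2 N.d2) (hdisj : R1.Disjoint R2) (hman : ¬ Manageable N R1 R2)
    (hn1 : nInterf N Set.univ R1 N.s2 ≠ 1) (hv : v ∈ R1) (hw : w ∈ R2) (hvw : N.E v w)
    (hp : IsPath N.E p N.s1 N.d2) : v ∈ p := by
  have hn2 : nInterf N Set.univ R2 N.s1 = 1 := by
    by_contra h
    exact hman ⟨Set.univ, fun _ _ => trivial, fun _ _ => trivial, hn1, h⟩
  obtain ⟨u, hu⟩ := Set.ncard_eq_one.mp hn2
  have huniq : ∀ y, InterferesOn N Set.univ R2 N.s1 y → y = u := fun y hy =>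
    (Set.ext_iff.mp hu y).mp hy
  obtain ⟨q, -, hq, -, hqR1, -, -⟩ := hR1.split hv
  have hvu : v = u := huniq v ⟨trivial, hdisj hv, ⟨w, hw, trivial, hvw⟩, q, hq,
    fun _ _ => trivial, fun y hy => hdisj (hqR1 hy)⟩
  exact hvu ▸ mem_of_forall_interferesOn_eq huniq hR2.s1_notMem hp hR2.getLast_mem

theorem mem_of_isPath_s1_d2_of_detour {P11 p : List V} {v0 v5 v6 : V}
    (hP11 : IsPath N.E P11 N.s1 N.d1) (hP22 : IsPath N.E P22 N.s2 N.d2) (hdisj : P11.Disjoint P22)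
    (hman : ∀ R2, IsPath N.E R2 N.s2 N.d2 → P11.Disjoint R2 → ¬ Manageable N P11 R2)
    (hn1 : nInterf N Set.univ P11 N.s2 ≠ 1) (hvm : vm ∈ P22) (hQ : IsPath N.E Q vm v2)
    (hQP11 : ∀ y ∈ Q, y ∉ P11) (hv2v0 : N.E v2 v0) (hv0 : v0 ∈ P22) (hv5 : v5 ∈ P11)
    (hv6 : v6 ∈ Q) (hv5v6 : N.E v5 v6) (hp : IsPath N.E p N.s1 N.d2) : v5 ∈ p := by
  obtain ⟨R2, hR2, hR2sub, hQR2⟩ := hP22.exists_detour hvm hQ hv2v0 hv0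
  have hR2P11 : P11.Disjoint R2 := fun y hy hyR2 =>
    (hR2sub y hyR2).elim (hdisj hy) fun h => hQP11 y h hy
  exact mem_of_isPath_s1_d2 hP11 hR2 hR2P11 (hman R2 hR2 hR2P11) hn1 hv5 (hQR2 hv6) hv5v6 hp

theorem exists_interferesOn_notMem (hP : IsPath N.E P N.s1 N.d1) (hxP : x ∉ P)
    (hPP22 : ∀ y ∈ P, y ∉ P22) (hP22 : IsPath N.E P22 N.s2 N.d2) (hvm : vm ∈ P22)
    (hQ : IsPath N.E Q vm v1) (hQP22 : ∀ y ∈ Q, y ∈ P22 → y = vm) (hv2 : v2 ∈ Q)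
    (hv2vm : v2 ≠ vm) (hR : IsPath N.E R w N.d1) (hv1w : N.E v1 w) (hRP22 : ∀ y ∈ R, y ∉ P22)
    (hxQ : x ∉ Q) (hcut : ∀ q, IsPath N.E q N.s1 v2 → x ∈ q) :
    ∃ u, InterferesOn N {y | y ∈ P ∨ y ∈ P22 ∨ y ∈ Q ∨ y ∈ R} P N.s2 u ∧ u ∉ P22 := by
  obtain ⟨Q₁, Q₂, hQ₁, hQ₂, hQ₁Q, hQ₂Q, -⟩ := hQ.split hv2
  obtain ⟨A, -, hA, -, hAP22, -, -⟩ := hP22.split hvm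
  have hXP : ∀ y ∈ A ++ Q₁.tail, y ∉ P := by
    intro y hy hyP
    rcases mem_append.mp hy with hyA | hyQ₁
    · exact hPP22 y hyP (hAP22 hyA)
    obtain ⟨P₁, -, hP₁, -, hP₁P, -, -⟩ := hP.split hyP
    obtain ⟨-, r, -, hr, -, hrQ₁, -⟩ := hQ₁.split (mem_of_mem_tail hyQ₁)
    rcases mem_append.mp (hcut _ (hP₁.trans hr)) with h | h
    exacts [hxP (hP₁P h), hxQ (hQ₁Q (hrQ₁ (mem_of_mem_tail h)))]
  obtain ⟨u, huY, hu⟩ := exists_interferesOn_of_isPath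
    (S := {y | y ∈ P ∨ y ∈ P22 ∨ y ∈ Q ∨ y ∈ R}) (hA.trans hQ₁) hXP (hQ₂.append hv1w hR)
    hP.getLast_mem
    (fun y hy => (mem_append.mp hy).elim (fun h => Or.inr (.inl (hAP22 h)))
      (fun h => Or.inr (.inr (.inl (hQ₁Q (mem_of_mem_tail h))))))
    (fun y hy => (mem_append.mp hy).elim (fun h => Or.inr (.inr (.inl (hQ₂Q h))))
      (fun h => Or.inr (.inr (.inr h))))
  refine ⟨u, hu, fun huP22 => ?_⟩
  rcases mem_append.mp huY with huQ₂ | huR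
  · obtain rfl := hQP22 u (hQ₂Q huQ₂) huP22
    obtain ⟨r, -, hr, -, -, -, -⟩ := hQ₂.split huQ₂
    exact hv2vm (hr.eq_of_isPath hQ₁)
  · exact hRP22 u huR huP22


theorem mem_of_isPath_s1_d1 (hP22 : IsPath N.E P22 N.s2 N.d2) (hvm : vm ∈ P22)
    (hQ : IsPath N.E Q vm v1) (hQP22 : ∀ y ∈ Q, y ∈ P22 → y = vm) (hv2 : v2 ∈ Q)
    (hv2vm : v2 ≠ vm) (hR : IsPath N.E R w N.d1) (hv1w : N.E v1 w) (hRP22 : ∀ y ∈ R, y ∉ P22)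
    (hxP22 : x ∉ P22) (hxQ : x ∉ Q) (hxR : x ∉ R)
    (huniq : ∀ v, InterferesOn N Set.univ P22 N.s1 v → v = v2)
    (hcut : ∀ q, IsPath N.E q N.s1 v2 → x ∈ q)
    (hman : ∀ P, IsPath N.E P N.s1 N.d1 → P.Disjoint P22 → ¬ Manageable N P P22)
    (hP : IsPath N.E P N.s1 N.d1) : x ∈ P := by
  by_contra hxP
  have hPP22 : ∀ y ∈ P, y ∉ P22 := by
    intro y hyP hyP22
    obtain ⟨P₁, -, hP₁, -, hP₁P, -, -⟩ := hP.split hyP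
    obtain ⟨P₂, -, hP₂, -, hP₂P₁, -, -⟩ :=
      hP₁.split (mem_of_forall_interferesOn_eq huniq hP22.s1_notMem hP₁ hyP22)
    exact hxP (hP₁P (hP₂P₁ (hcut P₂ hP₂)))
  have hnm := hman P hP fun y hyP hyP22 => hPP22 y hyP hyP22
  have hn2 : ∀ S, x ∉ S → nInterf N S P22 N.s1 = 0 := fun S hS => nInterf_eq_zero huniq hcut hS
  obtain ⟨xs, hxs⟩ : ∃ xs, InterferesOn N {y | y ∈ P ∨ y ∈ P22} P N.s2 xs := by
    by_contra! h
    refine hnm ⟨{y | y ∈ P ∨ y ∈ P22}, fun y => Or.inl, fun y => Or.inr, ?_, ?_⟩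
    · simp [nInterf, h]
    · rw [hn2 _ (by rintro (h | h); exacts [hxP h, hxP22 h])]
      omega
  obtain ⟨u, hu, huP22⟩ := exists_interferesOn_notMem hP hxP hPP22 hP22 hvm hQ hQP22 hv2 hv2vm
    hR hv1w hRP22 hxQ hcut
  have hxsP22 : xs ∈ P22 := hxs.1.resolve_left hxs.2.1
  refine hnm ⟨{y | y ∈ P ∨ y ∈ P22 ∨ y ∈ Q ∨ y ∈ R}, fun y => Or.inl, fun y h => Or.inr (.inl h),
    ?_, ?_⟩
  · exact (one_lt_nInterf hu (hxs.mono fun y => Or.imp_right Or.inl)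
      (ne_of_mem_of_not_mem hxsP22 huP22).symm).ne'
  · rw [hn2 _ (by rintro (h | h | h | h); exacts [hxP h, hxP22 h, hxQ h, hxR h])]
    omega

end CaseC1

theorem statement6_general {V : Type*} [Fintype V] [DecidableEq V]
    (N : TwoUnicastNetwork V)
    (P11 P22 Ps2v1 Pvmv1 Ps1v2 : List V)
    (v0 v1 v2 v5 v6 vm : V)
    (hP11 : IsPath N.E P11 N.s1 N.d1)
    (hP22 : IsPath N.E P22 N.s2 N.d2)
    (hdisj : P11.Disjoint P22)
    (hNoMan : ∀ R1 R2 : List V, IsPath N.E R1 N.s1 N.d1 → IsPath N.E R2 N.s2 N.d2 →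
      R1.Disjoint R2 → ¬ Manageable N R1 R2)
    (hn1 : 2 ≤ nInterf N Set.univ P11 N.s2)
    (hv1int : InterferesOn N Set.univ P11 N.s2 v1)
    (hPs2v1 : IsPath N.E Ps2v1 N.s2 v1)
    (hPs2v1disj : Ps2v1.Disjoint P11)
    (hvmP22 : vm ∈ P22)
    (hvmlast : ∀ x ∈ Ps2v1, x ∈ P22 → Ps2v1.idxOf x ≤ Ps2v1.idxOf vm)
    (hPvmv1 : IsPath N.E Pvmv1 vm v1)
    (hPvmv1suffix : Pvmv1 <:+ Ps2v1)
    (hv2Pvmv1 : v2 ∈ Pvmv1)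
    (hv2ne : v2 ≠ vm)
    (hv2unique : {v | InterferesOn N Set.univ P22 N.s1 v} = {v2})
    (hv0P22 : v0 ∈ P22)
    (hv2v0 : N.E v2 v0)
    (hPs1v2 : IsPath N.E Ps1v2 N.s1 v2)
    (hPs1v2sub : ∀ x ∈ Ps1v2, x ∈ P11 ∨ x ∈ P22 ∨ x ∈ Pvmv1)
    (hv5P11 : v5 ∈ P11)
    (hv5mem : v5 ∈ Ps1v2)
    (hv5last : ∀ x ∈ Ps1v2, x ∈ P11 → Ps1v2.idxOf x ≤ Ps1v2.idxOf v5)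
    (hv6succ : ∃ k : ℕ, Ps1v2[k]? = some v5 ∧ Ps1v2[k+1]? = some v6) :
    (∀ p : List V, IsPath N.E p N.s1 N.d1 → v5 ∈ p) ∧
    (∀ p : List V, IsPath N.E p N.s1 N.d2 → v5 ∈ p) := by
  have hv2 : ∀ v, InterferesOn N Set.univ P22 N.s1 v → v = v2 := fun v hv =>
    (Set.ext_iff.mp hv2unique v).mp hv
  have hv2P22 : v2 ∉ P22 := ((Set.ext_iff.mp hv2unique v2).mpr rfl).2.1
  obtain ⟨k, hk5, hk6⟩ := hv6succ
  have hv5v6 : N.E v5 v6 := hPs1v2.rel_of_getElem? hk5 hk6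
  have hv6 : v6 ∈ Ps1v2 := mem_of_getElem? hk6
  have hv6Q : v6 ∈ Pvmv1 := by
    rcases hPs1v2sub v6 hv6 with h | h | h
    · exact absurd h (hPs1v2.notMem_of_idxOf_le hv5mem hv6 hv5v6 hv5last)
    · exact absurd h (hPs1v2.notMem_of_forall_interferesOn_eq hv2 hv2P22 hP22.s1_notMem v6 hv6)
    · exact h
  have hQP11 : ∀ y ∈ Pvmv1, y ∉ P11 := fun y hy => hPs2v1disj (hPvmv1suffix.subset hy)
  obtain ⟨Q₁, Q₂, hQ₁, hQ₂, hQ₁Q, -, hQ⟩ := hPvmv1.split hv2Pvmv1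
  obtain ⟨-, r, -, hr, -⟩ := hPs1v2.split hv6
  have hd2 : ∀ p, IsPath N.E p N.s1 N.d2 → v5 ∈ p := fun p =>
    mem_of_isPath_s1_d2_of_detour hP11 hP22 hdisj (hNoMan P11 · hP11) (by omega) hvmP22 hQ₁
      (fun y hy => hQP11 y (hQ₁Q hy)) hv2v0 hv0P22 hv5P11
      (hQ₁.mem_left_of_isPath hQ₂ (hQ v6 hv6Q) hr) hv5v6
  obtain ⟨-, P22', -, hP22', -, hP22'P22, -⟩ := hP22.split hv0P22
  have hcut : ∀ q, IsPath N.E q N.s1 v2 → v5 ∈ q := fun q =>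
    IsPath.mem_of_forall_mem_of_rel hd2 hv2v0 hP22' fun h => hdisj hv5P11 (hP22'P22 h)
  obtain ⟨w, hwP11, -, hv1w⟩ := hv1int.2.2.1
  obtain ⟨-, R, -, hR, -, hRP11, -⟩ := hP11.split hwP11
  obtain ⟨-, r', -, hr', -⟩ := hPvmv1.split hv6Q
  refine ⟨fun p => mem_of_isPath_s1_d1 hP22 hvmP22 hPvmv1
    (fun y hy => hPs2v1.eq_of_mem_suffix_of_idxOf_le hPvmv1suffix hPvmv1 hvmlast hy) hv2Pvmv1
    hv2ne hR hv1w (fun y hy => hdisj (hRP11 hy)) (hdisj hv5P11) (fun h => hQP11 v5 h hv5P11)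
    (hR.notMem_of_rel_of_isPath hv5v6 (hr'.append hv1w (.singleton w))) hv2 hcut
    (fun P hP => hNoMan P P22 hP hP22), hd2⟩

theorem statement6 {V : Type*} [Fintype V] [DecidableEq V]
    (N : TwoUnicastNetwork V)
    (P11 P22 Ps2v1 Pvmv1 Ps1v2 : List V)
    (v0 v1 v2 v3 v4 v5 v6 vm : V)
    (hP11 : IsPath N.E P11 N.s1 N.d1)
    (hP22 : IsPath N.E P22 N.s2 N.d2)
    (hdisj : P11.Disjoint P22)
    (hNoMan : ∀ R1 R2 : List V, IsPath N.E R1 N.s1 N.d1 → IsPath N.E R2 N.s2 N.d2 →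
      R1.Disjoint R2 → ¬ Manageable N R1 R2)
    (hn1 : 2 ≤ nInterf N Set.univ P11 N.s2)
    (hn1D : nDirect N P11 P22 N.s2 = 1)
    (hn2 : nInterf N Set.univ P22 N.s1 = 1)
    (hn2D : nDirect N P22 P11 N.s1 = 0)
    (hv3P22 : v3 ∈ P22)
    (hv3unique : {v | InterferesOn N Set.univ P11 N.s2 v ∧ v ∈ P22} = {v3})
    (hv4P11 : v4 ∈ P11)
    (hv3v4 : N.E v3 v4)
    (hv3v4unique : ∀ w ∈ P11, N.E v3 w → w = v4)
    (hv1P11 : v1 ∉ P11)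
    (hv1P22 : v1 ∉ P22)
    (hv1int : InterferesOn N Set.univ P11 N.s2 v1)
    (hPs2v1 : IsPath N.E Ps2v1 N.s2 v1)
    (hPs2v1disj : Ps2v1.Disjoint P11)
    (hvmP22 : vm ∈ P22)
    (hvmPs2v1 : vm ∈ Ps2v1)
    (hvmlast : ∀ x ∈ Ps2v1, x ∈ P22 → Ps2v1.idxOf x ≤ Ps2v1.idxOf vm)
    (hPvmv1 : IsPath N.E Pvmv1 vm v1)
    (hPvmv1suffix : Pvmv1 <:+ Ps2v1)
    (hv2Pvmv1 : v2 ∈ Pvmv1)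
    (hv2ne : v2 ≠ vm)
    (hv2unique : {v | InterferesOn N Set.univ P22 N.s1 v} = {v2})
    (hv0P22 : v0 ∈ P22)
    (hv2v0 : N.E v2 v0)
    (hv2v0unique : ∀ w ∈ P22, N.E v2 w → w = v0)
    (hPs1v2 : IsPath N.E Ps1v2 N.s1 v2)
    (hPs1v2sub : ∀ x ∈ Ps1v2, x ∈ P11 ∨ x ∈ P22 ∨ x ∈ Pvmv1)
    (hv5P11 : v5 ∈ P11)
    (hv5mem : v5 ∈ Ps1v2)
    (hv5last : ∀ x ∈ Ps1v2, x ∈ P11 → Ps1v2.idxOf x ≤ Ps1v2.idxOf v5)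
    (hv6succ : ∃ k : ℕ, Ps1v2[k]? = some v5 ∧ Ps1v2[k+1]? = some v6) :
    (∀ p : List V, IsPath N.E p N.s1 N.d1 → v5 ∈ p) ∧
    (∀ p : List V, IsPath N.E p N.s1 N.d2 → v5 ∈ p) :=
  statement6_general N P11 P22 Ps2v1 Pvmv1 Ps1v2 v0 v1 v2 v5 v6 vm hP11 hP22 hdisj hNoMan hn1 hv1int
    hPs2v1 hPs2v1disj hvmP22 hvmlast hPvmv1 hPvmv1suffix hv2Pvmv1 hv2ne hv2unique hv0P22 hv2v0
    hPs1v2 hPs1v2sub hv5P11 hv5mem hv5last hv6succ
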